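/- Let 0 < a ≤ b, λ = a/b, and suppose k(k-1)/a ≤ 1. Define P = ∑_{m=1}^k (−1)^(m+1) binomial(k,m) ∏_{i=0}^{m-1} (a+i)/(b+i). Then |P − (1 − exp(−kλ))| ≤ exp(kλ)·k(k-1)/a + exp(−kλ)·kλ². -/

import Mathlib

open Real Finset

/-!
Compare every rising-factorial ratio `∏_{i<m} (a+i)/(b+i)` with `λ^m`: it is at least `λ^m`
because each factor is, and at most `λ^m · exp(m(m-1)/(2a)) ≤ λ^m (1 + m(m-1)/a)` since
`(a+i)/(b+i) ≤ λ(1 + i/a)`. Summed against the binomial weights, which total `(1+λ)^k - 1`,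
these errors replace `P` by `1 - (1-λ)^k` at cost `exp(kλ)·k(k-1)/a`. Finally
`exp(-kλ)(1 - kλ²) ≤ exp(-kλ)(1-λ²)^k ≤ (1-λ)^k ≤ exp(-kλ)`, using `exp(-λ)(1+λ) ≤ 1` and Bernoulli.
-/

lemma exp_le_one_add_two_mul {x : ℝ} (hx : 0 ≤ x) (hx2 : 2 * x ≤ 1) : exp x ≤ 1 + 2 * x := by
  have hx1 : x < 1 := by linarith
  calc exp x ≤ 1 / (1 - x) := exp_bound_div_one_sub_of_interval hx hx1
    _ ≤ 1 + 2 * x := by rw [div_le_iff₀ (by linarith)]; nlinarith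

lemma exp_neg_mul_one_sub_sq_le {x : ℝ} (hx : x ≤ 1) : exp (-x) * (1 - x ^ 2) ≤ 1 - x := by
  have h : exp (-x) * (x + 1) ≤ 1 := by
    simpa [← exp_add] using mul_le_mul_of_nonneg_left (add_one_le_exp x) (exp_pos (-x)).le
  nlinarith [exp_pos (-x)]

lemma sum_range_natCast (m : ℕ) : ∑ i ∈ range m, (i : ℝ) = m * (m - 1) / 2 := by
  induction m with
  | zero => simp
  | succ m ih => rw [sum_range_succ, ih]; push_cast; ring

lemma sum_Icc_choose_mul_pow {R : Type*} [CommRing R] (x : R) (k : ℕ) :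
    ∑ m ∈ Icc 1 k, (k.choose m : R) * x ^ m = (1 + x) ^ k - 1 := by
  rw [add_comm, add_pow, range_eq_Ico, sum_eq_sum_Ico_succ_bot (Nat.zero_lt_succ k),
    zero_add, Nat.succ_eq_add_one, Finset.Ico_add_one_right_eq_Icc]
  simp [mul_comm]

lemma sum_Icc_neg_one_pow_succ_mul_choose_mul_pow {R : Type*} [CommRing R] (x : R) (k : ℕ) :
    ∑ m ∈ Icc 1 k, (-1 : R) ^ (m + 1) * k.choose m * x ^ m = 1 - (1 - x) ^ k := by
  have h := sum_Icc_choose_mul_pow (-x) k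
  rw [← sub_eq_add_neg] at h
  rw [← neg_sub, ← h, ← sum_neg_distrib]
  refine sum_congr rfl fun m _ => ?_
  rw [neg_pow, pow_succ]
  ring

lemma natCast_mul_natCast_sub_one_nonneg (m : ℕ) : 0 ≤ (m : ℝ) * (m - 1) := by
  rcases m.eq_zero_or_pos with rfl | hm
  · simp
  · exact mul_nonneg m.cast_nonneg (sub_nonneg.2 (by exact_mod_cast hm))

lemma pow_div_le_prod_add_div_add {a b : ℝ} (ha : 0 ≤ a) (hb : 0 < b) (hab : a ≤ b) (m : ℕ) :
    (a / b) ^ m ≤ ∏ i ∈ range m, (a + i) / (b + i) := by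
  rw [pow_eq_prod_const]
  refine prod_le_prod (fun _ _ => by positivity) fun i _ => ?_
  rw [div_le_div_iff₀ hb (by positivity)]
  nlinarith [i.cast_nonneg (α := ℝ)]

lemma prod_add_div_add_le_pow_mul_exp {a b : ℝ} (ha : 0 < a) (hb : 0 < b) (m : ℕ) :
    ∏ i ∈ range m, (a + i) / (b + i) ≤ (a / b) ^ m * exp (m * (m - 1) / (2 * a)) := by
  have hfactor (i : ℕ) : (a + i) / (b + i) ≤ a / b * exp (i / a) :=
    calc (a + i) / (b + i) ≤ (a + i) / b := by gcongr; exact le_add_of_nonneg_right i.cast_nonneg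
      _ = a / b * (i / a + 1) := by field_simp; ring
      _ ≤ a / b * exp (i / a) := by gcongr; exact add_one_le_exp _
  calc ∏ i ∈ range m, (a + i) / (b + i) ≤ ∏ i ∈ range m, a / b * exp (i / a) :=
        prod_le_prod (fun i _ => by positivity) fun i _ => hfactor i
    _ = (a / b) ^ m * exp (m * (m - 1) / (2 * a)) := by
        rw [prod_mul_distrib, prod_const, card_range, ← exp_sum, ← sum_div, sum_range_natCast]
        ring_nf

lemma abs_prod_add_div_add_sub_pow_le {a b : ℝ} (ha : 0 < a) (hab : a ≤ b) {m : ℕ}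
    (hm : m * (m - 1) / a ≤ 1) :
    |∏ i ∈ range m, (a + i) / (b + i) - (a / b) ^ m| ≤ (a / b) ^ m * (m * (m - 1) / a) := by
  have hb : 0 < b := ha.trans_le hab
  have htwice : 2 * (m * (m - 1) / (2 * a)) = m * (m - 1) / a := by field_simp
  have hexp : exp (m * (m - 1) / (2 * a)) ≤ 1 + m * (m - 1) / a := htwice ▸
    exp_le_one_add_two_mul (div_nonneg (natCast_mul_natCast_sub_one_nonneg m) (by positivity))
      (htwice ▸ hm)
  rw [abs_of_nonneg (sub_nonneg.2 (pow_div_le_prod_add_div_add ha.le hb hab m))]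
  have hupper := (prod_add_div_add_le_pow_mul_exp ha hb m).trans
    (mul_le_mul_of_nonneg_left hexp (by positivity))
  linarith

lemma abs_sum_Icc_neg_one_pow_succ_mul_choose_mul_sub_le {x ε : ℝ} (hx : 0 ≤ x) (hε : 0 ≤ ε)
    {k : ℕ} (c : ℕ → ℝ) (hc : ∀ m ∈ Icc 1 k, |c m - x ^ m| ≤ x ^ m * ε) :
    |∑ m ∈ Icc 1 k, (-1 : ℝ) ^ (m + 1) * k.choose m * c m - (1 - (1 - x) ^ k)|
      ≤ exp (k * x) * ε := by
  rw [← sum_Icc_neg_one_pow_succ_mul_choose_mul_pow, ← sum_sub_distrib]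
  calc _ ≤ ∑ m ∈ Icc 1 k,
          |(-1 : ℝ) ^ (m + 1) * k.choose m * c m - (-1) ^ (m + 1) * k.choose m * x ^ m| :=
        abs_sum_le_sum_abs _ _
    _ = ∑ m ∈ Icc 1 k, k.choose m * |c m - x ^ m| := sum_congr rfl fun m _ => by
        rw [← mul_sub, abs_mul, abs_mul, abs_pow, abs_neg, abs_one, one_pow, one_mul,
          Nat.abs_cast]
    _ ≤ ∑ m ∈ Icc 1 k, k.choose m * x ^ m * ε := sum_le_sum fun m hm => by
        rw [mul_assoc]; gcongr; exact hc m hm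
    _ = ((1 + x) ^ k - 1) * ε := by rw [← sum_mul, sum_Icc_choose_mul_pow]
    _ ≤ exp x ^ k * ε := by
        gcongr
        exact (sub_le_self _ zero_le_one).trans (by gcongr; linarith [add_one_le_exp x])
    _ = exp (k * x) * ε := by rw [exp_nat_mul]

lemma abs_exp_neg_mul_sub_one_sub_pow_le {x : ℝ} (hx0 : 0 ≤ x) (hx1 : x ≤ 1) (k : ℕ) :
    |exp (-(k * x)) - (1 - x) ^ k| ≤ exp (-(k * x)) * k * x ^ 2 := by
  have hexp : exp (-(k * x)) = exp (-x) ^ k := by rw [← exp_nat_mul, mul_neg]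
  have hupper : (1 - x) ^ k ≤ exp (-(k * x)) :=
    hexp ▸ pow_le_pow_left₀ (by linarith) (one_sub_le_exp_neg x) k
  have hlower : exp (-(k * x)) * (1 - k * x ^ 2) ≤ (1 - x) ^ k :=
    calc exp (-(k * x)) * (1 - k * x ^ 2) ≤ exp (-x) ^ k * (1 - x ^ 2) ^ k := by
          rw [hexp]
          gcongr
          simpa [sub_eq_add_neg] using one_add_mul_le_pow (a := -x ^ 2) (by nlinarith) k
      _ = (exp (-x) * (1 - x ^ 2)) ^ k := (mul_pow ..).symm
      _ ≤ (1 - x) ^ k :=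
          pow_le_pow_left₀ (mul_nonneg (exp_pos _).le (by nlinarith))
            (exp_neg_mul_one_sub_sq_le hx1) k
  rw [abs_of_nonneg (sub_nonneg.2 hupper)]
  linarith

theorem inclusion_exclusion_coverage_bound_general (a b : ℝ) (ha : 0 < a) (hab : a ≤ b)
    (k : ℕ) (ht : (k : ℝ) * (k - 1) / a ≤ 1) :
    |(∑ m ∈ Finset.Icc 1 k, (-1 : ℝ) ^ (m + 1) * (k.choose m : ℝ)
        * ∏ i ∈ Finset.range m, (a + i) / (b + i))
      - (1 - Real.exp (-(k * (a / b))))|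
    ≤ Real.exp (k * (a / b)) * k * (k - 1) / a
      + Real.exp (-(k * (a / b))) * k * (a / b) ^ 2 := by
  have hb : 0 < b := ha.trans_le hab
  have hratio : 0 ≤ a / b := by positivity
  have hcoef (m : ℕ) (hm : m ∈ Icc 1 k) :
      |∏ i ∈ range m, (a + i) / (b + i) - (a / b) ^ m| ≤ (a / b) ^ m * (k * (k - 1) / a) := by
    obtain ⟨hm1, hmk⟩ := mem_Icc.1 hm
    have hmono : (m : ℝ) * (m - 1) / a ≤ k * (k - 1) / a := by
      gcongr
      exact sub_nonneg.2 (by exact_mod_cast hm1)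
    exact (abs_prod_add_div_add_sub_pow_le ha hab (hmono.trans ht)).trans (by gcongr)
  have hE1 := abs_sum_Icc_neg_one_pow_succ_mul_choose_mul_sub_le hratio
    (div_nonneg (natCast_mul_natCast_sub_one_nonneg k) ha.le) _ hcoef
  have hE2 := abs_exp_neg_mul_sub_one_sub_pow_le hratio (div_le_one_of_le₀ hab hb.le) k
  calc _ ≤ _ := abs_sub_le _ (1 - (1 - a / b) ^ k) _
    _ ≤ exp (k * (a / b)) * (k * (k - 1) / a) + exp (-(k * (a / b))) * k * (a / b) ^ 2 := by
        rw [sub_sub_sub_cancel_left]; exact add_le_add hE1 hE2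
    _ = _ := by ring

/-- let `0 < a ≤ b`, `λ = a/b`, and `k(k-1)/a ≤ 1` with `k` a positive
integer. For the inclusion–exclusion expression
`P = ∑_{m=1}^k (−1)^(m+1) C(k,m) ∏_{i=0}^{m-1} (a+i)/(b+i)` one has
`|P − (1 − exp(−kλ))| ≤ exp(kλ)·k(k-1)/a + exp(−kλ)·kλ²`. -/
theorem inclusion_exclusion_coverage_bound (a b : ℝ) (ha : 0 < a) (hab : a ≤ b)
    (k : ℕ) (hk : 1 ≤ k) (ht : (k : ℝ) * (k - 1) / a ≤ 1) :
    |(∑ m ∈ Finset.Icc 1 k, (-1 : ℝ) ^ (m + 1) * (k.choose m : ℝ)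
        * ∏ i ∈ Finset.range m, (a + i) / (b + i))
      - (1 - Real.exp (-(k * (a / b))))|
    ≤ Real.exp (k * (a / b)) * k * (k - 1) / a
      + Real.exp (-(k * (a / b))) * k * (a / b) ^ 2 :=
  inclusion_exclusion_coverage_bound_general a b ha hab k ht
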